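/- arXiv:1003.3808 — 6 statements merged into one kernel-verified Lean document; each statement's English description precedes it below -/
import Mathlib

section
/- Let F be a field of characteristic zero containing an element i with i² = −1, and let t ∈ F with 1 + t ≠ 0. Then there exists a change of Weierstrass variables C over F (in the sense of Mathlib's WeierstrassCurve.VariableChange, i.e. given by a unit u and elements r, s, v of F acting by (x, y) ↦ (u²x + r, u³y + u²sx + v)) such that applying C to the Weierstrass curve E₈'(t) yields exactly the Weierstrass curve E₈((1 − t)/(1 + t)); moreover one may take u = 2i(t + 1) and r = −(7t² + 8t + 8). -/
open WeierstrassCurve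

/-- The Weierstrass curve `E₈(t) : y² + 4xy + 4t²y = x³ + t²x²`. -/
def E8 {F : Type*} [CommRing F] (t : F) : WeierstrassCurve F :=
  ⟨4, t ^ 2, 4 * t ^ 2, 0, 0⟩

/-- The Weierstrass curve `E₈'(t) : y² + 4xy + 4t²y = x³ + t²x² + b(t)x + c(t)`. -/
def E8' {F : Type*} [CommRing F] (t : F) : WeierstrassCurve F :=
  ⟨4, t ^ 2, 4 * t ^ 2,
    -5 * t ^ 4 - 320 * t ^ 3 - 720 * t ^ 2 - 320 * t,
    3 * t ^ 6 - 704 * t ^ 5 - 5184 * t ^ 4 - 8896 * t ^ 3 - 5888 * t ^ 2 - 1024 * t⟩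

section

variable {F : Type*} [Field F] {i t : F}

/-- The isomorphism `E₈'(t) → E₈((1 - t)/(1 + t))`: `s`, `r` and `v` are forced by matching
`a₁`, `a₂` and `a₃`, and the `a₄`, `a₆` equations then hold because `i² = -1`. -/
def e8VariableChange (i t : F) (hu : 2 * i * (t + 1) ≠ 0) : VariableChange F where
  u := Units.mk0 _ hu
  r := -(7 * t ^ 2 + 8 * t + 8)
  s := 4 * i * (t + 1) - 2
  t := -16 * i * (t + 1) * (1 - t) ^ 2 + 12 * t ^ 2 + 16 * t + 16

theorem e8VariableChange_smul_e8' (hi : i ^ 2 = -1) (hu : 2 * i * (t + 1) ≠ 0) :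
    e8VariableChange i t hu • E8' t = E8 ((1 - t) / (1 + t)) := by
  have hi3 : i ^ 3 = -i := by rw [pow_succ, hi]; ring
  -- `field_simp` needs the factors of `u` to be nonzero separately.
  have h2 : (2 : F) ≠ 0 := left_ne_zero_of_mul (left_ne_zero_of_mul hu)
  have hi0 : i ≠ 0 := right_ne_zero_of_mul (left_ne_zero_of_mul hu)
  have ht : t + 1 ≠ 0 := right_ne_zero_of_mul hu
  rw [add_comm 1 t]
  ext <;>
    simp only [variableChange_def, e8VariableChange, E8, E8', Units.val_inv_eq_inv_val,
      Units.val_mk0, inv_pow] <;>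
    field_simp <;>
    ring_nf <;>
    simp only [hi, hi3] <;>
    ring

end

/-- over a field of characteristic zero containing `i` with `i² = -1`, for any `t`
with `1 + t ≠ 0`, there is a change of Weierstrass variables taking `E₈'(t)` to
`E₈((1 - t)/(1 + t))`, and one may take `u = 2i(t + 1)`, `r = -(7t² + 8t + 8)`. -/
theorem stmt_1 (F : Type*) [Field F] [CharZero F] (i t : F) (hi : i ^ 2 = -1)
    (ht : 1 + t ≠ 0) :
    ∃ C : VariableChange F,
      C • (E8' t) = E8 ((1 - t) / (1 + t)) ∧
      (C.u : F) = 2 * i * (t + 1) ∧ C.r = -(7 * t ^ 2 + 8 * t + 8) := by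
  have hi0 : i ≠ 0 := by
    rintro rfl
    simp at hi
  have hu : 2 * i * (t + 1) ≠ 0 :=
    mul_ne_zero (mul_ne_zero two_ne_zero hi0) (by rwa [add_comm])
  exact ⟨e8VariableChange i t hu, e8VariableChange_smul_e8' hi hu, rfl, rfl⟩
end

section
/- Let F = ℚ(t) be the field of rational functions in one variable t over ℚ. There is no change of Weierstrass variables C over F (in the sense of Mathlib's WeierstrassCurve.VariableChange) such that applying C to the Weierstrass curve E₈'(t) yields the Weierstrass curve E₈((1 − t)/(1 + t)); i.e., E₈'(t) and E₈((1−t)/(1+t)) are not isomorphic as Weierstrass curves over ℚ(t). -/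
/-!
Under a change of variables with scaling `u`, `c₄` and `c₆` are multiplied by `u⁻⁴` and `u⁻⁶`, so
the class of `c₄ c₆` modulo squares is an isomorphism invariant. For `s = (1 - t)/(1 + t)` one has
`c₄(E₈'(t)) = (2(1 + t))⁴ c₄(E₈(s))` but `c₆(E₈'(t)) = -(2(1 + t))⁶ c₆(E₈(s))`, so the two classes
differ by `-1`, which is not a square in `ℚ(t)` (clear denominators and evaluate).
-/

open WeierstrassCurve

theorem WeierstrassCurve.isSquare_c₄_mul_c₆_mul_variableChange {R : Type*} [CommRing R]
    (W : WeierstrassCurve R) (C : VariableChange R) :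
    IsSquare (W.c₄ * W.c₆ * ((C • W).c₄ * (C • W).c₆)) := by
  rw [variableChange_c₄, variableChange_c₆]
  exact ⟨(C.u⁻¹ : Rˣ) ^ 5 * W.c₄ * W.c₆, by ring⟩

theorem isSquare_neg_one_of_isSquare_neg_sq {K : Type*} [Field K] {g : K} (hg : g ≠ 0)
    (h : IsSquare (-g ^ 2)) : IsSquare (-1 : K) := by
  simpa [hg] using h.div (IsSquare.sq g)

theorem RatFunc.not_isSquare_neg_one {K : Type*} [Field K] [LinearOrder K]
    [IsStrictOrderedRing K] : ¬IsSquare (-1 : RatFunc K) := by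
  rintro ⟨f, hf⟩
  have hnum : algebraMap (Polynomial K) (RatFunc K) f.num =
      f * algebraMap (Polynomial K) (RatFunc K) f.denom :=
    (div_eq_iff (algebraMap_ne_zero f.denom_ne_zero)).mp f.num_div_denom
  have hsum : f.num * f.num + f.denom * f.denom = 0 := by
    apply algebraMap_injective K
    rw [map_add, map_mul, map_mul, hnum, map_zero]
    linear_combination -(algebraMap (Polynomial K) (RatFunc K) f.denom) ^ 2 * hf
  refine f.denom_ne_zero (Polynomial.zero_of_eval_zero _ fun x => ?_)
  have := congrArg (Polynomial.eval x) hsum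
  simp only [Polynomial.eval_add, Polynomial.eval_mul, Polynomial.eval_zero] at this
  exact (mul_self_add_mul_self_eq_zero.mp this).2

theorem E8'_map {R S : Type*} [CommRing R] [CommRing S] (f : R →+* S) (t : R) :
    (E8' t).map f = E8' (f t) := by
  ext <;> simp [E8', map_ofNat]

theorem c₄_mul_c₆_E8'_X_ne_zero {K : Type*} [Field K] [CharZero K] :
    (E8' (RatFunc.X : RatFunc K)).c₄ * (E8' (RatFunc.X : RatFunc K)).c₆ ≠ 0 := by
  rw [← RatFunc.algebraMap_X, ← E8'_map, map_c₄, map_c₆, ← map_mul]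
  refine RatFunc.algebraMap_ne_zero fun h => ?_
  have := congrArg (Polynomial.evalRingHom 0) h
  rw [map_mul, ← map_c₄, ← map_c₆, E8'_map] at this
  norm_num [E8', c₄, c₆, b₂, b₄, b₆] at this

theorem c₄_E8'_eq_mul_c₄_E8 {F : Type*} [Field F] {t : F} (ht : 1 + t ≠ 0) :
    (E8' t).c₄ = (2 * (1 + t)) ^ 4 * (E8 ((1 - t) / (1 + t))).c₄ := by
  simp only [E8, E8', c₄, b₂, b₄]
  field_simp
  ring

theorem c₆_E8'_eq_neg_mul_c₆_E8 {F : Type*} [Field F] {t : F} (ht : 1 + t ≠ 0) :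
    (E8' t).c₆ = -(2 * (1 + t)) ^ 6 * (E8 ((1 - t) / (1 + t))).c₆ := by
  simp only [E8, E8', c₆, b₂, b₄, b₆]
  field_simp
  ring

/-- over `ℚ(t)` there is no change of Weierstrass variables taking `E₈'(t)` to
`E₈((1 - t)/(1 + t))`; i.e. the two curves are not isomorphic over `ℚ(t)`. -/
theorem stmt_2 :
    ¬ ∃ C : VariableChange (RatFunc ℚ),
        C • (E8' (RatFunc.X : RatFunc ℚ)) =
          E8 ((1 - RatFunc.X) / (1 + RatFunc.X) : RatFunc ℚ) := by
  rintro ⟨C, hC⟩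
  have ht : (1 + RatFunc.X : RatFunc ℚ) ≠ 0 := by
    rw [← RatFunc.algebraMap_X, ← map_one (algebraMap (Polynomial ℚ) _), ← map_add, add_comm,
      ← Polynomial.C_1]
    exact RatFunc.algebraMap_ne_zero (Polynomial.X_add_C_ne_zero 1)
  have hsq := (E8' (RatFunc.X : RatFunc ℚ)).isSquare_c₄_mul_c₆_mul_variableChange C
  rw [hC, c₄_E8'_eq_mul_c₄_E8 ht, c₆_E8'_eq_neg_mul_c₆_E8 ht] at hsq
  set a : RatFunc ℚ := 2 * (1 + RatFunc.X)
  set e₄ := (E8 ((1 - RatFunc.X) / (1 + RatFunc.X) : RatFunc ℚ)).c₄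
  set e₆ := (E8 ((1 - RatFunc.X) / (1 + RatFunc.X) : RatFunc ℚ)).c₆
  have hg : a ^ 5 * e₄ * e₆ ≠ 0 := fun hg => c₄_mul_c₆_E8'_X_ne_zero (K := ℚ) <| by
    rw [c₄_E8'_eq_mul_c₄_E8 ht, c₆_E8'_eq_neg_mul_c₆_E8 ht]
    linear_combination (-a ^ 5) * hg
  refine RatFunc.not_isSquare_neg_one (isSquare_neg_one_of_isSquare_neg_sq hg ?_)
  convert hsq using 1
  ring
end

section
/- Let F = ℚ(t) be the rational function field over ℚ with t the indeterminate, and consider the Weierstrass curve E₈(t) over F. The affine point (0, 0) lies on E₈(t), is a nonsingular point, and has exact order 4 in the group of points E₈(t)(F); moreover 2·(0,0) is the 2-torsion point (−t², 0). -/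
/-!
At `P = (0, 0)` the partial derivative in `x` of the equation vanishes, so the tangent at `P` is
the horizontal line `y = 0`. It meets `E₈(t)` again where `x³ + t²x² = 0`, i.e. at `(-t², 0)`,
so `2P = (-t², 0)`. That point equals its own negative `(x, -y - 4x - 4t²)`, hence has order 2,
and `P` has order 4.
-/

open WeierstrassCurve

namespace E8

section CommRing

variable {R : Type*} [CommRing R] (t : R)

lemma equation_zero : (E8 t).toAffine.Equation 0 0 := by
  rw [Affine.equation_iff]
  simp [E8]

lemma equation_neg_sq : (E8 t).toAffine.Equation (-t ^ 2) 0 := by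
  rw [Affine.equation_iff]
  simp only [E8]
  ring

lemma negY_neg_sq : (E8 t).toAffine.negY (-t ^ 2) 0 = 0 := by
  simp only [Affine.negY, E8]
  ring

end CommRing

variable {F : Type*} [Field F] {t : F}

lemma negY_zero_ne (h2 : (2 : F) ≠ 0) (ht : t ≠ 0) : (0 : F) ≠ (E8 t).toAffine.negY 0 0 := by
  have h4 : (4 : F) ≠ 0 := by simpa [show (4 : F) = 2 ^ 2 by norm_num] using h2
  simp [Affine.negY, E8, h4, ht]

lemma nonsingular_zero (h2 : (2 : F) ≠ 0) (ht : t ≠ 0) : (E8 t).toAffine.Nonsingular 0 0 :=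
  (Affine.nonsingular_iff _ _).2 ⟨equation_zero t, Or.inr (by simpa using negY_zero_ne h2 ht)⟩

lemma nonsingular_neg_sq (ht : t ≠ 0) : (E8 t).toAffine.Nonsingular (-t ^ 2) 0 := by
  refine (Affine.nonsingular_iff _ _).2 ⟨equation_neg_sq t, Or.inl ?_⟩
  have : (3 : F) * (-t ^ 2) ^ 2 + 2 * t ^ 2 * -t ^ 2 + 0 = t ^ 4 := by ring
  simp only [E8, mul_zero, this]
  exact (pow_ne_zero 4 ht).symm

variable [DecidableEq F]

lemma slope_zero (h2 : (2 : F) ≠ 0) (ht : t ≠ 0) : (E8 t).toAffine.slope 0 0 0 0 = 0 := by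
  rw [Affine.slope_of_Y_ne rfl (negY_zero_ne h2 ht)]
  simp [E8]

lemma two_nsmul_point_zero (h2 : (2 : F) ≠ 0) (ht : t ≠ 0) :
    2 • Affine.Point.some _ _ (nonsingular_zero h2 ht) =
      Affine.Point.some _ _ (nonsingular_neg_sq ht) := by
  rw [two_nsmul, Affine.Point.add_self_of_Y_ne (negY_zero_ne h2 ht), Affine.Point.some.injEq]
  constructor
  · rw [Affine.addX, slope_zero h2 ht]
    simp only [E8]
    ring
  · rw [Affine.addY, Affine.negAddY, Affine.addX, slope_zero h2 ht]
    simp only [Affine.negY, E8]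
    ring

lemma addOrderOf_point_zero (h2 : (2 : F) ≠ 0) (ht : t ≠ 0) :
    addOrderOf (Affine.Point.some _ _ (nonsingular_zero h2 ht)) = 4 := by
  have hdouble := two_nsmul_point_zero h2 ht
  have hne : ¬ 2 ^ 1 • Affine.Point.some _ _ (nonsingular_zero h2 ht) = 0 := by
    rw [pow_one, hdouble]
    exact Affine.Point.some_ne_zero _
  have hfour : 2 ^ (1 + 1) • Affine.Point.some _ _ (nonsingular_zero h2 ht) = 0 := by
    rw [pow_succ, mul_nsmul, pow_one, hdouble, two_nsmul,
      Affine.Point.add_self_of_Y_eq (negY_neg_sq t).symm]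
  exact addOrderOf_eq_prime_pow hne hfour

end E8

open Classical in
/-- over `ℚ(t)`, the point `(0, 0)` lies on `E₈(t)`, is nonsingular, has exact
order 4 in the group of points, and its double is the 2-torsion point `(-t², 0)`. -/
theorem stmt_3 :
    letI F := RatFunc ℚ
    letI W : Affine F := (E8 (RatFunc.X : F)).toAffine
    W.Equation 0 0 ∧
    ∃ (h : W.Nonsingular 0 0) (h' : W.Nonsingular (-(RatFunc.X : F) ^ 2) 0),
      addOrderOf (Affine.Point.some _ _ h) = 4 ∧
      2 • (Affine.Point.some _ _ h) = Affine.Point.some _ _ h' :=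
  ⟨E8.equation_zero _, E8.nonsingular_zero two_ne_zero RatFunc.X_ne_zero,
    E8.nonsingular_neg_sq RatFunc.X_ne_zero,
    E8.addOrderOf_point_zero two_ne_zero RatFunc.X_ne_zero,
    E8.two_nsmul_point_zero two_ne_zero RatFunc.X_ne_zero⟩
end

section
/- The polynomial X⁴ − 18X² + 40X − 27 is irreducible over ℚ, and its Galois group over ℚ has order 24; hence it is isomorphic to the symmetric group S₄. -/
/-!
The resolvent cubic of `X⁴ - 18X² + 40X - 27` is `Y³ + 18Y² + 108Y + 344 = (Y + 6)³ + 128`. It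
has no root modulo 7, so its root field `ℚ(∛2)` lies in the splitting field and `3` divides the
order of the Galois group `G`. The quartic has no root modulo 5, and a factorisation into two
rational quadratics would give the resolvent a rational root; so the quartic is irreducible and `4`
divides `|G|`. Thus `G` has index at most two in the symmetric group on the four complex roots. The
quartic has exactly two real roots, so complex conjugation acts as a transposition; since `A₄` is
the only subgroup of index two and contains no transposition, `G` is the full symmetric group.
-/

open Polynomial

attribute [local instance] Polynomial.Gal.splits_ℚ_ℂ

theorem Polynomial.Monic.aeval_rat_ne_zero_of_forall_zmod {P : ℤ[X]} (hP : P.Monic) {n : ℕ}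
    (hn : ∀ x : ZMod n, aeval x P ≠ 0) (r : ℚ) : aeval r P ≠ 0 := by
  intro hr
  obtain ⟨z, rfl⟩ := isInteger_of_is_root_of_monic hP hr
  rw [aeval_algebraMap_apply, map_eq_zero_iff _ (algebraMap ℤ ℚ).injective_int] at hr
  apply hn z
  rw [← eq_intCast (algebraMap ℤ (ZMod n)), aeval_algebraMap_apply, hr, map_zero]

theorem Polynomial.Monic.eq_X_sq_add_C_mul_X_add_C {R : Type*} [CommRing R] {p : R[X]}
    (hm : p.Monic) (hd : p.natDegree = 2) : p = X ^ 2 + C (p.coeff 1) * X + C (p.coeff 0) := by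
  conv_lhs => rw [hm.as_sum, hd]
  simp only [Finset.sum_range_succ, Finset.range_one, Finset.sum_singleton, pow_zero, pow_one,
    mul_one]
  ring

theorem Polynomial.Splits.exists_eq_prod_X_sub_C_of_natDegree_eq_four {K : Type*} [Field K]
    {p : K[X]} (hs : p.Splits) (hm : p.Monic) (hd : p.natDegree = 4) :
    ∃ a b c d : K, p = (X - C a) * (X - C b) * ((X - C c) * (X - C d)) := by
  have hcard : Multiset.card p.roots = 4 := by rw [← hs.natDegree_eq_card_roots, hd]
  obtain ⟨a, ha⟩ := Multiset.card_pos_iff_exists_mem.mp (by rw [hcard]; norm_num)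
  obtain ⟨t, ht⟩ := Multiset.exists_cons_of_mem ha
  obtain ⟨b, c, d, rfl⟩ := Multiset.card_eq_three.mp (by simpa [ht] using hcard)
  refine ⟨a, b, c, d, ?_⟩
  rw [hs.eq_prod_roots_of_monic hm, ht]
  simp only [Multiset.insert_eq_cons, Multiset.map_cons, Multiset.prod_cons,
    Multiset.map_singleton, Multiset.prod_singleton]
  ring

/-- `Y³ - pY² - 4rY + 4pr - q²` is the resolvent cubic of `X⁴ + pX² + qX + r`; if the factors
have roots `a, b` and `c, d`, then `t + v = ab + cd`. -/
theorem resolvent_eval_add_eq_zero_of_eq_mul {R : Type*} [CommRing R] {p q r s t u v : R}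
    (h : (X ^ 4 + C p * X ^ 2 + C q * X + C r : R[X]) =
      (X ^ 2 + C s * X + C t) * (X ^ 2 + C u * X + C v)) :
    (t + v) ^ 3 - p * (t + v) ^ 2 - 4 * r * (t + v) + (4 * p * r - q ^ 2) = 0 := by
  have hexp : (X ^ 2 + C s * X + C t) * (X ^ 2 + C u * X + C v) =
      X ^ 4 + C (s + u) * X ^ 3 + C (t + v + s * u) * X ^ 2 + C (s * v + t * u) * X
        + C (t * v) := by
    simp only [map_add, map_mul]; ring
  rw [hexp] at h
  have e3 := congrArg (coeff · 3) h
  have e2 := congrArg (coeff · 2) h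
  have e1 := congrArg (coeff · 1) h
  have e0 := congrArg (coeff · 0) h
  simp only [coeff_add, coeff_C_mul, coeff_X_pow, coeff_X, coeff_C, Nat.reduceEqDiff, ↓reduceIte,
    mul_one, mul_zero, add_zero, zero_add] at e3 e2 e1 e0
  linear_combination (t ^ 2 * u + s * v ^ 2) * e3 + (4 * t * v - (t + v) ^ 2) * e2
    - (q + s * v + t * u) * e1 + (4 * p - 4 * (t + v)) * e0

theorem Equiv.Perm.eq_top_of_index_le_two_of_isSwap_mem {α : Type*} [Fintype α] [DecidableEq α]
    {G : Subgroup (Equiv.Perm α)} (hG : G.index ≤ 2) {σ : Equiv.Perm α} (hσ : σ.IsSwap)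
    (hσG : σ ∈ G) : G = ⊤ := by
  obtain h | h : G.index = 1 ∨ G.index = 2 := by have := G.index_ne_zero_of_finite; omega
  · exact Subgroup.index_eq_one.mp h
  · rw [eq_alternatingGroup_of_index_eq_two h, Equiv.Perm.mem_alternatingGroup, hσ.sign_eq] at hσG
    exact absurd hσG (by decide)

namespace Polynomial.Gal

theorem natDegree_dvd_card_of_irreducible {F : Type*} [Field F] {p : F[X]} (hi : Irreducible p)
    (hs : p.Separable) : p.natDegree ∣ Nat.card p.Gal := by
  rw [card_of_separable hs]
  exact hi.natDegree_dvd_finrank (SplittingField.splits p)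

theorem natDegree_dvd_card_of_aeval_eq_zero {F : Type*} [Field F] {p q : F[X]}
    (hi : Irreducible q) (hm : q.Monic) (hs : p.Separable) {x : p.SplittingField}
    (hx : aeval x q = 0) : q.natDegree ∣ Nat.card p.Gal := by
  rw [card_of_separable hs, minpoly.eq_of_irreducible_of_monic hi hx hm]
  exact minpoly.degree_dvd (.of_finite F x)

theorem galActionHom_conj_isSwap {p : ℚ[X]}
    (p_roots : Fintype.card (p.rootSet ℂ) = Fintype.card (p.rootSet ℝ) + 2) :
    (galActionHom p ℂ (restrict p ℂ (Complex.conjAe.restrictScalars ℚ))).IsSwap := by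
  rw [← Equiv.Perm.card_support_eq_two]
  have key := card_complex_roots_eq_card_real_add_card_not_gal_inv p
  simp_rw [Set.toFinset_card] at key
  omega

theorem galActionHom_bijective_of_factorial_le_two_mul_card {p : ℚ[X]}
    (p_roots : Fintype.card (p.rootSet ℂ) = Fintype.card (p.rootSet ℝ) + 2)
    (p_card : (Fintype.card (p.rootSet ℂ)).factorial ≤ 2 * Nat.card p.Gal) :
    Function.Bijective (galActionHom p ℂ) := by
  have hinj := galActionHom_injective p ℂ
  refine ⟨hinj, MonoidHom.range_eq_top.mp ?_⟩
  have hrange : Nat.card (galActionHom p ℂ).range = Nat.card p.Gal :=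
    (Nat.card_congr (MonoidHom.ofInjective hinj).toEquiv).symm
  have hindex : (galActionHom p ℂ).range.index ≤ 2 := by
    have h := (galActionHom p ℂ).range.card_mul_index
    rw [hrange, Nat.card_perm, Nat.card_eq_fintype_card (α := p.rootSet ℂ)] at h
    have : 0 < Nat.card p.Gal := Nat.card_pos
    nlinarith
  exact Equiv.Perm.eq_top_of_index_le_two_of_isSwap_mem hindex (galActionHom_conj_isSwap p_roots)
    ⟨_, rfl⟩

end Polynomial.Gal

noncomputable def quartic : ℚ[X] := X ^ 4 - 18 * X ^ 2 + 40 * X - 27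

noncomputable def quarticResolvent : ℚ[X] := X ^ 3 + 18 * X ^ 2 + 108 * X + 344

theorem quartic_eq_C_mul : quartic = X ^ 4 + C (-18) * X ^ 2 + C 40 * X + C (-27) := by
  simp only [quartic, map_neg, C_ofNat]; ring

theorem quartic_natDegree : quartic.natDegree = 4 := by unfold quartic; compute_degree!

theorem quartic_monic : quartic.Monic := by unfold quartic; monicity!

theorem quartic_separable : quartic.Separable := by
  rw [separable_def]
  refine ⟨C (1 / 24) * X ^ 2 - C (1 / 2), -C (1 / 96) * X ^ 3 + C (7 / 32) * X - C (5 / 16), ?_⟩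
  apply Polynomial.funext
  intro x
  simp only [quartic, derivative_sub, derivative_X_pow_succ, derivative_mul, derivative_ofNat,
    derivative_X, eval_add, eval_sub, eval_mul, eval_pow, eval_C, eval_X, eval_ofNat, eval_neg,
    eval_one, eval_zero, map_add, map_one, Nat.cast_ofNat, Nat.cast_one]
  ring

theorem quartic_eval_ne_zero (r : ℚ) : quartic.eval r ≠ 0 := by
  have hmonic : (X ^ 4 - 18 * X ^ 2 + 40 * X - 27 : ℤ[X]).Monic := by monicity!
  have h := hmonic.aeval_rat_ne_zero_of_forall_zmod (n := 5)
    (by simp only [map_sub, map_add, map_pow, aeval_X, map_mul, map_ofNat, ne_eq]; decide) r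
  simpa [quartic, map_ofNat] using h

theorem quarticResolvent_natDegree : quarticResolvent.natDegree = 3 := by
  unfold quarticResolvent; compute_degree!

theorem quarticResolvent_eval_ne_zero (r : ℚ) : quarticResolvent.eval r ≠ 0 := by
  have hmonic : (X ^ 3 + 18 * X ^ 2 + 108 * X + 344 : ℤ[X]).Monic := by monicity!
  have h := hmonic.aeval_rat_ne_zero_of_forall_zmod (n := 7)
    (by simp only [map_add, map_pow, aeval_X, map_mul, map_ofNat, ne_eq]; decide) r
  simpa [quarticResolvent, map_ofNat] using h

theorem quarticResolvent_irreducible : Irreducible quarticResolvent :=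
  irreducible_of_degree_le_three_of_not_isRoot (by simp [quarticResolvent_natDegree])
    quarticResolvent_eval_ne_zero

theorem quarticResolvent_aeval_add_eq_zero {K : Type*} [Field K] [Algebra ℚ K] {s t u v : K}
    (h : quartic.map (algebraMap ℚ K) = (X ^ 2 + C s * X + C t) * (X ^ 2 + C u * X + C v)) :
    aeval (t + v) quarticResolvent = 0 := by
  rw [quartic_eq_C_mul] at h
  simp only [Polynomial.map_add, Polynomial.map_mul, Polynomial.map_pow, map_X, map_C] at h
  have h' := resolvent_eval_add_eq_zero_of_eq_mul h
  simp only [map_neg, map_ofNat] at h'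
  simp only [quarticResolvent, map_add, map_mul, map_pow, aeval_X, map_ofNat]
  linear_combination h'

theorem quartic_irreducible : Irreducible quartic := by
  refine quartic_monic.irreducible_iff_natDegree'.mpr ⟨?_, fun g h hg hh hgh hdeg ↦ ?_⟩
  · intro h1; simpa [h1] using quartic_natDegree
  have hsum : g.natDegree + h.natDegree = 4 := by
    rw [← hg.natDegree_mul hh, hgh, quartic_natDegree]
  rw [quartic_natDegree, Finset.mem_Ioc] at hdeg
  obtain hlin | hquad : h.natDegree = 1 ∨ h.natDegree = 2 := by omega
  · obtain ⟨r, hr⟩ := exists_root_of_degree_eq_one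
      ((degree_eq_iff_natDegree_eq_of_pos one_pos).mpr hlin)
    exact quartic_eval_ne_zero r (by rw [← hgh, eval_mul, hr.eq_zero, mul_zero])
  · rw [hg.eq_X_sq_add_C_mul_X_add_C (by omega), hh.eq_X_sq_add_C_mul_X_add_C hquad] at hgh
    exact quarticResolvent_eval_ne_zero _
      (quarticResolvent_aeval_add_eq_zero (K := ℚ) (by simpa using hgh.symm))

theorem three_dvd_card_gal_quartic : 3 ∣ Nat.card quartic.Gal := by
  obtain ⟨a, b, c, d, hroots⟩ :=
    (SplittingField.splits quartic).exists_eq_prod_X_sub_C_of_natDegree_eq_four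
      (quartic_monic.map _) (by rw [natDegree_map, quartic_natDegree])
  have hpair (x y : quartic.SplittingField) :
      (X - C x) * (X - C y) = X ^ 2 + C (-(x + y)) * X + C (x * y) := by
    simp only [map_neg, map_add, map_mul]; ring
  rw [hpair, hpair] at hroots
  rw [← quarticResolvent_natDegree]
  exact Polynomial.Gal.natDegree_dvd_card_of_aeval_eq_zero quarticResolvent_irreducible
    (by unfold quarticResolvent; monicity!) quartic_separable
    (quarticResolvent_aeval_add_eq_zero hroots)

theorem twelve_dvd_card_gal_quartic : 12 ∣ Nat.card quartic.Gal := by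
  have h4 := Polynomial.Gal.natDegree_dvd_card_of_irreducible quartic_irreducible quartic_separable
  rw [quartic_natDegree] at h4
  exact Nat.Coprime.mul_dvd_of_dvd_of_dvd (by norm_num) three_dvd_card_gal_quartic h4

theorem quartic_aeval_real (x : ℝ) : aeval x quartic = x ^ 4 - 18 * x ^ 2 + 40 * x - 27 := by
  simp [quartic, map_ofNat]

theorem quartic_aeval_real_neg_of_mem_Icc {x : ℝ} (hx : x ∈ Set.Icc (-4) (11 / 5)) :
    aeval x quartic < 0 := by
  obtain ⟨h1, h2⟩ := hx
  have a1 : 0 ≤ x + 4 := by linarith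
  have a2 : 0 ≤ 11 / 5 - x := by linarith
  rw [quartic_aeval_real]
  nlinarith [sq_nonneg (x ^ 2 + 2 * x - 5), mul_nonneg a1 a2, sq_nonneg (x + 1), sq_nonneg x,
    mul_nonneg (mul_nonneg a1 a2) a1, mul_nonneg (mul_nonneg a1 a2) a2]

theorem quartic_aeval_real_sub (x y : ℝ) : aeval y quartic - aeval x quartic =
    (y - x) * (x ^ 3 + x ^ 2 * y + x * y ^ 2 + y ^ 3 - 18 * x - 18 * y + 40) := by
  rw [quartic_aeval_real, quartic_aeval_real]; ring

theorem quartic_aeval_real_strictAntiOn : StrictAntiOn (aeval · quartic) (Set.Iic (-4 : ℝ)) := by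
  intro x hx y hy hxy
  simp only [Set.mem_Iic] at hx hy
  have hs : 0 ≤ -4 - x := by linarith
  have ht : 0 ≤ -4 - y := by linarith
  have hg : x ^ 3 + x ^ 2 * y + x * y ^ 2 + y ^ 3 - 18 * x - 18 * y + 40 < 0 := by
    nlinarith [mul_nonneg hs ht, mul_nonneg hs hs, mul_nonneg ht ht]
  nlinarith [quartic_aeval_real_sub x y, mul_neg_of_pos_of_neg (sub_pos.mpr hxy) hg]

theorem quartic_aeval_real_strictMonoOn :
    StrictMonoOn (aeval · quartic) (Set.Ici (11 / 5 : ℝ)) := by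
  intro x hx y hy hxy
  simp only [Set.mem_Ici] at hx hy
  have hs : 0 ≤ x - 11 / 5 := by linarith
  have ht : 0 ≤ y - 11 / 5 := by linarith
  have hg : 0 < x ^ 3 + x ^ 2 * y + x * y ^ 2 + y ^ 3 - 18 * x - 18 * y + 40 := by
    nlinarith [mul_nonneg hs ht, mul_nonneg hs hs, mul_nonneg ht ht]
  nlinarith [quartic_aeval_real_sub x y, mul_pos (sub_pos.mpr hxy) hg]

theorem card_rootSet_real_quartic : Fintype.card (quartic.rootSet ℝ) = 2 := by
  have hcont : Continuous (aeval · quartic : ℝ → ℝ) := quartic.continuous_aeval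
  obtain ⟨x₁, ⟨-, hx₁⟩, hroot₁⟩ := intermediate_value_Icc' (by norm_num : (-6 : ℝ) ≤ -4)
    hcont.continuousOn (show (0 : ℝ) ∈ Set.Icc _ _ by norm_num [quartic_aeval_real])
  obtain ⟨x₂, ⟨hx₂, -⟩, hroot₂⟩ := intermediate_value_Icc (by norm_num : (11 / 5 : ℝ) ≤ 3)
    hcont.continuousOn (show (0 : ℝ) ∈ Set.Icc _ _ by norm_num [quartic_aeval_real])
  have hroots : quartic.rootSet ℝ = {x₁, x₂} := by
    ext z
    rw [mem_rootSet_of_ne quartic_monic.ne_zero, Set.mem_insert_iff, Set.mem_singleton_iff]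
    refine ⟨fun hz ↦ ?_, by rintro (rfl | rfl) <;> assumption⟩
    by_cases hz₁ : z ≤ -4
    · exact Or.inl (quartic_aeval_real_strictAntiOn.injOn hz₁ hx₁ (hz.trans hroot₁.symm))
    by_cases hz₂ : 11 / 5 ≤ z
    · exact Or.inr (quartic_aeval_real_strictMonoOn.injOn hz₂ hx₂ (hz.trans hroot₂.symm))
    exact absurd hz (quartic_aeval_real_neg_of_mem_Icc ⟨by linarith, by linarith⟩).ne
  rw [← Nat.card_eq_fintype_card, hroots, Nat.card_coe_set_eq,
    Set.ncard_pair (by intro h; linarith)]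

theorem card_rootSet_complex_quartic : Fintype.card (quartic.rootSet ℂ) = 4 := by
  rw [card_rootSet_eq_natDegree quartic_separable (IsAlgClosed.splits _), quartic_natDegree]

theorem galActionHom_quartic_bijective :
    Function.Bijective (Polynomial.Gal.galActionHom quartic ℂ) := by
  refine Polynomial.Gal.galActionHom_bijective_of_factorial_le_two_mul_card
    (by rw [card_rootSet_complex_quartic, card_rootSet_real_quartic]) ?_
  obtain ⟨k, hk⟩ := twelve_dvd_card_gal_quartic
  have : 0 < Nat.card quartic.Gal := Nat.card_pos
  rw [card_rootSet_complex_quartic, hk]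
  simp only [Nat.factorial]
  omega

/-- `X⁴ - 18X² + 40X - 27` is irreducible over `ℚ` and its Galois group over `ℚ`
has order 24, hence is isomorphic to `S₄`. -/
theorem stmt_13 :
    Irreducible (X ^ 4 - 18 * X ^ 2 + 40 * X - 27 : ℚ[X]) ∧
    Nat.card (X ^ 4 - 18 * X ^ 2 + 40 * X - 27 : ℚ[X]).Gal = 24 ∧
    Nonempty ((X ^ 4 - 18 * X ^ 2 + 40 * X - 27 : ℚ[X]).Gal ≃* Equiv.Perm (Fin 4)) := by
  let e : quartic.Gal ≃* Equiv.Perm (Fin 4) :=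
    (MulEquiv.ofBijective _ galActionHom_quartic_bijective).trans
      (Fintype.equivFinOfCardEq card_rootSet_complex_quartic).permCongrHom
  refine ⟨quartic_irreducible, ?_, ⟨e⟩⟩
  calc Nat.card quartic.Gal = Nat.card (Equiv.Perm (Fin 4)) := Nat.card_congr e.toEquiv
    _ = 24 := by rw [Nat.card_perm, Nat.card_fin]; rfl
end

section
/- There exists a ℚ-algebra homomorphism from the splitting field of X³ − 2 over ℚ into the splitting field of X⁴ + 6X² + 8X − 3 over ℚ; i.e., the splitting field of the quartic X⁴ + 6X² + 8X − 3 contains a copy of the splitting field of x³ − 2. -/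
/-!
If `a, b, c, d` are the roots of a depressed quartic `X⁴ + pX² + qX + r`, then `ab + cd`,
`ac + bd`, `ad + bc` are the roots of its resolvent cubic `X³ - pX² - 4rX + (4pr - q²)`, so the
resolvent cubic splits in the splitting field of the quartic. For `X⁴ + 6X² + 8X - 3` the
resolvent cubic is `X³ - 6X² + 12X - 136 = (X - 2)³ - 128`, and the substitution `X = 4Y + 2`
turns it into `64 (Y³ - 2)`. Hence `X³ - 2` splits in the splitting field of the quartic, which
therefore receives the splitting field of `X³ - 2`.
-/

open Polynomial

section CommRing

variable {R : Type*} [CommRing R]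

noncomputable def resolventCubic (p q r : R) : R[X] :=
  X ^ 3 - C p * X ^ 2 - C (4 * r) * X + C (4 * p * r - q ^ 2)

theorem prod_four_X_sub_C (a b c d : R) :
    (X - C a) * (X - C b) * (X - C c) * (X - C d) =
      X ^ 4 - C (a + b + c + d) * X ^ 3 + C (a*b + a*c + a*d + b*c + b*d + c*d) * X ^ 2
        - C (a*b*c + a*b*d + a*c*d + b*c*d) * X + C (a*b*c*d) := by
  simp only [map_add, map_mul]; ring

theorem vieta_of_depressed_quartic_eq_prod {p q r a b c d : R}
    (h : X ^ 4 + C p * X ^ 2 + C q * X + C r = (X - C a) * (X - C b) * (X - C c) * (X - C d)) :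
    a + b + c + d = 0 ∧ a*b + a*c + a*d + b*c + b*d + c*d = p ∧
      a*b*c + a*b*d + a*c*d + b*c*d = -q ∧ a*b*c*d = r := by
  rw [prod_four_X_sub_C] at h
  have coeff_eq (n : ℕ) := congrArg (coeff · n) h
  have h3 := coeff_eq 3
  have h2 := coeff_eq 2
  have h1 := coeff_eq 1
  have h0 := coeff_eq 0
  simp only [coeff_add, coeff_sub, coeff_C_mul, coeff_X_pow, coeff_C, coeff_X] at h3 h2 h1 h0
  norm_num at h3 h2 h1 h0
  exact ⟨by linear_combination h3, by linear_combination -h2,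
    by linear_combination h1, by linear_combination -h0⟩

theorem resolventCubic_eq_prod {p q r a b c d : R}
    (h : X ^ 4 + C p * X ^ 2 + C q * X + C r = (X - C a) * (X - C b) * (X - C c) * (X - C d)) :
    resolventCubic p q r = (X - C (a*b + c*d)) * (X - C (a*c + b*d)) * (X - C (a*d + b*c)) := by
  obtain ⟨h1, rfl, hq, rfl⟩ := vieta_of_depressed_quartic_eq_prod h
  obtain rfl : q = -(a*b*c + a*b*d + a*c*d + b*c*d) := by linear_combination hq
  obtain rfl : d = -(a + b + c) := by linear_combination h1
  rw [resolventCubic]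
  simp only [map_add, map_sub, map_mul, map_neg, map_pow, map_ofNat]
  ring

theorem resolventCubic_six_eight_neg_three_comp :
    (resolventCubic (6 : R) 8 (-3)).comp (C 4 * X + C 2) = C 64 * (X ^ 3 - 2) := by
  norm_num [resolventCubic, C_ofNat]
  ring

end CommRing

section Field

variable {K : Type*} [Field K]

theorem exists_eq_prod_four_X_sub_C {f : K[X]} (hf : f.Splits) (hm : f.Monic)
    (hdeg : f.natDegree = 4) :
    ∃ a b c d, f = (X - C a) * (X - C b) * (X - C c) * (X - C d) := by
  obtain ⟨a, b, c, d, hroots⟩ :=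
    Multiset.card_eq_four.mp ((splits_iff_card_roots.mp hf).trans hdeg)
  refine ⟨a, b, c, d, ?_⟩
  rw [hf.eq_prod_roots_of_monic hm, hroots]
  simp [mul_assoc]

theorem Polynomial.Splits.resolventCubic {p q r : K}
    (h : (X ^ 4 + C p * X ^ 2 + C q * X + C r).Splits) : (resolventCubic p q r).Splits := by
  have hm : (X ^ 4 + C p * X ^ 2 + C q * X + C r).Monic := by monicity!
  have hdeg : (X ^ 4 + C p * X ^ 2 + C q * X + C r).natDegree = 4 := by compute_degree!
  obtain ⟨a, b, c, d, hprod⟩ := exists_eq_prod_four_X_sub_C h hm hdeg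
  rw [resolventCubic_eq_prod hprod]
  exact ((Splits.X_sub_C _).mul (Splits.X_sub_C _)).mul (Splits.X_sub_C _)

end Field

/-- the splitting field of `X⁴ + 6X² + 8X - 3` over `ℚ` contains a copy of the
splitting field of `X³ - 2` over `ℚ`. -/
theorem stmt_14 :
    Nonempty ((X ^ 3 - 2 : ℚ[X]).SplittingField →ₐ[ℚ]
      (X ^ 4 + 6 * X ^ 2 + 8 * X - 3 : ℚ[X]).SplittingField) := by
  set L := (X ^ 4 + 6 * X ^ 2 + 8 * X - 3 : ℚ[X]).SplittingField
  have hquartic : (X ^ 4 + C (6 : L) * X ^ 2 + C 8 * X + C (-3)).Splits := by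
    convert SplittingField.splits (X ^ 4 + 6 * X ^ 2 + 8 * X - 3 : ℚ[X]) using 1
    simp [sub_eq_add_neg, C_ofNat]
  have hcube : (X ^ 3 - 2 : L[X]).Splits := by
    have h := hquartic.resolventCubic.comp_of_natDegree_le_one
      (g := C 4 * X + C 2) natDegree_linear_le
    rw [resolventCubic_six_eight_neg_three_comp] at h
    simpa [← mul_assoc, ← C_mul] using h.C_mul 64⁻¹
  exact ⟨SplittingField.lift _ (by simpa using hcube)⟩
end

section
/- There exists a ℚ-algebra homomorphism from the splitting field of X³ − 2 over ℚ into the splitting field of X⁴ − 18X² + 40X − 27 over ℚ; i.e., the splitting field of the quartic X⁴ − 18X² + 40X − 27 contains a copy of the splitting field of x³ − 2. -/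
/-!
If `a, b, c, d` are the roots of `X⁴ - 18X² + 40X - 27` in its splitting field `K`, then
`θ = ab + cd` is a root of the resolvent cubic `X³ + 18X² + 108X + 344 = (X + 6)³ + 128`, so
`-(θ + 6)/4 ∈ K` is a cube root of `2`. Since `X³ - 2` is irreducible over `ℚ` and `K/ℚ` is normal,
`X³ - 2` splits in `K`, and its splitting field embeds into `K`.
-/

open Polynomial

theorem Multiset.exists_eq_of_card_eq_four {α : Type*} {s : Multiset α} (h : card s = 4) :
    ∃ a b c d, s = {a, b, c, d} := by
  rcases s with ⟨l⟩
  match l, h with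
  | [a, b, c, d], _ => exact ⟨a, b, c, d, rfl⟩

theorem Polynomial.Splits.exists_eq_prod_four {R : Type*} [CommRing R] [IsDomain R] {f : R[X]}
    (hf : Splits f) (hm : f.Monic) (hd : f.natDegree = 4) :
    ∃ a b c d, f = (X - C a) * (X - C b) * (X - C c) * (X - C d) := by
  obtain ⟨a, b, c, d, hr⟩ :=
    Multiset.exists_eq_of_card_eq_four ((splits_iff_card_roots.mp hf).trans hd)
  refine ⟨a, b, c, d, ?_⟩
  rw [hf.eq_prod_roots_of_monic hm, hr]
  simp [mul_assoc]

section Quartic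

variable {R : Type*} [CommRing R] {a b c d p q r s : R}

theorem vieta_quartic
    (h : (X - C a) * (X - C b) * (X - C c) * (X - C d) =
      X ^ 4 + C p * X ^ 3 + C q * X ^ 2 + C r * X + C s) :
    a + b + c + d = -p ∧ a * b + a * c + a * d + b * c + b * d + c * d = q ∧
      a * b * c + a * b * d + a * c * d + b * c * d = -r ∧ a * b * c * d = s := by
  have hexp : (X - C a) * (X - C b) * (X - C c) * (X - C d) =
      X ^ 4 + C (-(a + b + c + d)) * X ^ 3 + C (a * b + a * c + a * d + b * c + b * d + c * d) * X ^ 2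
        + C (-(a * b * c + a * b * d + a * c * d + b * c * d)) * X + C (a * b * c * d) := by
    simp only [map_neg, map_add, map_mul]
    ring
  rw [hexp] at h
  have h3 := congrArg (coeff · 3) h
  have h2 := congrArg (coeff · 2) h
  have h1 := congrArg (coeff · 1) h
  have h0 := congrArg (coeff · 0) h
  simp only [coeff_add, coeff_C_mul, coeff_X_pow, coeff_X, coeff_C] at h3 h2 h1 h0
  norm_num at h3 h2 h1 h0
  exact ⟨by linear_combination -h3, h2, by linear_combination -h1, h0⟩

theorem resolvent_cubic_mul_add_mul_eq_zero
    (h : (X - C a) * (X - C b) * (X - C c) * (X - C d) =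
      X ^ 4 + C p * X ^ 3 + C q * X ^ 2 + C r * X + C s) :
    (a * b + c * d) ^ 3 - q * (a * b + c * d) ^ 2 + (p * r - 4 * s) * (a * b + c * d)
      - (p ^ 2 * s - 4 * q * s + r ^ 2) = 0 := by
  obtain ⟨hp, rfl, hr, rfl⟩ := vieta_quartic h
  obtain rfl : p = -(a + b + c + d) := by linear_combination hp
  obtain rfl : r = -(a * b * c + a * b * d + a * c * d + b * c * d) := by linear_combination hr
  ring

end Quartic

theorem exists_pow_three_eq_two_of_splits {L : Type*} [Field L] [CharZero L]
    (h : Splits (X ^ 4 - 18 * X ^ 2 + 40 * X - 27 : L[X])) : ∃ u : L, u ^ 3 = 2 := by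
  obtain ⟨a, b, c, d, hf⟩ := h.exists_eq_prod_four (by monicity!) (by compute_degree!)
  have hθ := resolvent_cubic_mul_add_mul_eq_zero (p := 0) (q := -18) (r := 40) (s := -27)
    (hf.symm.trans (by simp only [map_neg, map_ofNat, map_zero]; ring))
  exact ⟨-(a * b + c * d + 6) / 4, by linear_combination (-1 / 64) * hθ⟩

theorem Rat.pow_ne_prime {p n : ℕ} (hp : p.Prime) (hn : 1 < n) (x : ℚ) : x ^ n ≠ p := by
  have : Fact p.Prime := ⟨hp⟩
  intro hx
  have hval : (n : ℤ) * padicValRat p x = 1 := by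
    rw [← padicValRat.pow, hx, padicValRat.self hp.one_lt]
  exact hn.ne' (Nat.dvd_one.mp (Int.natCast_dvd_natCast.mp ⟨_, hval.symm⟩))

theorem Normal.splits_of_irreducible {F L : Type*} [Field F] [Field L] [Algebra F L] [Normal F L]
    {p : F[X]} (hp : Irreducible p) (hm : p.Monic) {x : L} (hx : aeval x p = 0) :
    Splits (p.map (algebraMap F L)) :=
  minpoly.eq_of_irreducible_of_monic hp hx hm ▸ Normal.splits ‹_› x

-- `f.SplittingField` carries two `ℚ`-algebra structures: its own, for which Mathlib proves
-- normality, and `DivisionRing.toRatAlgebra`, which instance search finds; they agree because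
-- `Algebra ℚ _` is a subsingleton.
instance Polynomial.SplittingField.normal_rat (f : ℚ[X]) : Normal ℚ f.SplittingField := by
  convert SplittingField.instNormal f
  exact Subsingleton.elim _ _

/-- the splitting field of `X⁴ - 18X² + 40X - 27` over `ℚ` contains a copy of the
splitting field of `X³ - 2` over `ℚ`. -/
theorem stmt_15 :
    Nonempty ((X ^ 3 - 2 : ℚ[X]).SplittingField →ₐ[ℚ]
      (X ^ 4 - 18 * X ^ 2 + 40 * X - 27 : ℚ[X]).SplittingField) := by
  have hquartic := SplittingField.splits (X ^ 4 - 18 * X ^ 2 + 40 * X - 27 : ℚ[X])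
  obtain ⟨u, hu⟩ := exists_pow_three_eq_two_of_splits (by simpa using hquartic)
  have hirr : Irreducible (X ^ 3 - 2 : ℚ[X]) := by
    rw [← C_ofNat]
    exact X_pow_sub_C_irreducible_of_prime Nat.prime_three
      (Rat.pow_ne_prime Nat.prime_two (by norm_num))
  have hroot : aeval u (X ^ 3 - 2 : ℚ[X]) = 0 := by
    rw [map_sub, map_pow, aeval_X, hu, map_ofNat, sub_self]
  exact ⟨SplittingField.lift _ (Normal.splits_of_irreducible hirr (by monicity!) hroot)⟩
end
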